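/- Let H be a cocommutative Hopf algebra over k and let A, B be partial H-module algebras. Then A ⊗ B with the action h·(a⊗b) := Σ (h₍₁₎·a) ⊗ (h₍₂₎·b) is a partial H-module algebra. -/

import Mathlib

open TensorProduct

/-- The "Sweedler sum" Σ f(h₍₁₎) * g(h₍₂₎), as a linear map on H ⊗ H to be evaluated
at comul h. -/
noncomputable def sw (k : Type*) {H A : Type*} [Field k]
    [AddCommGroup H] [Module k H] [Ring A] [Algebra k A]
    (f g : H →ₗ[k] A) : H ⊗[k] H →ₗ[k] A :=
  TensorProduct.lift ((LinearMap.mul k A).compl₁₂ f g)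

/-- A (symmetric) partial H-module algebra structure on A given by a bilinear map
act : H ⊗ A → A. -/
def IsPartialAction (k : Type*) {H A : Type*} [Field k] [Ring H] [HopfAlgebra k H]
    [Ring A] [Algebra k A] (act : H →ₗ[k] A →ₗ[k] A) : Prop :=
  (∀ a : A, act 1 a = a) ∧
  (∀ (h : H) (a b : A),
    act h (a * b) = sw k (act.flip a) (act.flip b) (Coalgebra.comul (R := k) h)) ∧
  (∀ (h g : H) (a : A),
    act h (act g a) = sw k (act.flip 1) (act.flip a ∘ₗ LinearMap.mulRight k g)
      (Coalgebra.comul (R := k) h) ∧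
    act h (act g a) = sw k (act.flip a ∘ₗ LinearMap.mulRight k g) (act.flip 1)
      (Coalgebra.comul (R := k) h))

section helpers

variable {k H A B : Type*} [Field k]
variable [AddCommGroup H] [Module k H] [Ring A] [Algebra k A] [Ring B] [Algebra k B]

@[simp] lemma sw_tmul (f g : H →ₗ[k] A) (x y : H) : sw k f g (x ⊗ₜ y) = f x * g y := rfl

lemma sw_add_left (f f' g : H →ₗ[k] A) : sw k (f + f') g = sw k f g + sw k f' g := by
  ext x y; simp [add_mul]

lemma sw_add_right (f g g' : H →ₗ[k] A) : sw k f (g + g') = sw k f g + sw k f g' := by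
  ext x y; simp [mul_add]

lemma sw_zero_left (g : H →ₗ[k] A) : sw k (0 : H →ₗ[k] A) g = 0 := by
  ext x y; simp

lemma sw_zero_right (f : H →ₗ[k] A) : sw k f (0 : H →ₗ[k] A) = 0 := by
  ext x y; simp

/-- multiplication in `A ⊗ B` of images of two maps, in terms of `sw` and the
middle-four exchange. -/
lemma mul_map_map (fA gA : H →ₗ[k] A) (fB gB : H →ₗ[k] B) (s t : H ⊗[k] H) :
    (TensorProduct.map fA fB s) * (TensorProduct.map gA gB t) =
      TensorProduct.map (sw k fA gA) (sw k fB gB)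
        (tensorTensorTensorComm k H H H H (s ⊗ₜ t)) := by
  induction s using TensorProduct.induction_on with
  | zero => simp
  | tmul x y =>
    induction t using TensorProduct.induction_on with
    | zero => simp
    | tmul z w => simp [Algebra.TensorProduct.tmul_mul_tmul]
    | add t₁ t₂ h₁ h₂ => simp only [tmul_add, map_add, mul_add, h₁, h₂]
  | add s₁ s₂ h₁ h₂ => simp only [add_tmul, map_add, add_mul, h₁, h₂]

lemma sw_tensor (fA gA : H →ₗ[k] A) (fB gB : H →ₗ[k] B) (c : H →ₗ[k] H ⊗[k] H)
    (t : H ⊗[k] H) :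
    sw k (TensorProduct.map fA fB ∘ₗ c) (TensorProduct.map gA gB ∘ₗ c) t =
      TensorProduct.map (sw k fA gA) (sw k fB gB)
        (tensorTensorTensorComm k H H H H (TensorProduct.map c c t)) := by
  induction t using TensorProduct.induction_on with
  | zero => simp
  | tmul u v => simp [mul_map_map]
  | add t₁ t₂ h₁ h₂ => simp [h₁, h₂]

end helpers

section key
variable {k H : Type*} [Field k] [Ring H] [HopfAlgebra k H]

local notation "Δ" => (Coalgebra.comul (R := k) (A := H))

lemma G0 : TensorProduct.map Δ Δ =
    (Δ : H →ₗ[k] H ⊗[k] H).lTensor (H ⊗[k] H) ∘ₗ (Δ : H →ₗ[k] H ⊗[k] H).rTensor H := by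
  ext x y; simp

lemma G1 : (Δ : H →ₗ[k] H ⊗[k] H).lTensor (H ⊗[k] H) ∘ₗ
      (TensorProduct.assoc k H H H).symm.toLinearMap =
    (TensorProduct.assoc k H H (H ⊗[k] H)).symm.toLinearMap ∘ₗ
      (((Δ : H →ₗ[k] H ⊗[k] H).lTensor H).lTensor H) := by
  ext a b c
  simp

lemma G2 : (tensorTensorTensorComm k H H H H).toLinearMap ∘ₗ
      (TensorProduct.assoc k H H (H ⊗[k] H)).symm.toLinearMap ∘ₗ
      ((TensorProduct.assoc k H H H).toLinearMap.lTensor H) =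
    (TensorProduct.assoc k H H (H ⊗[k] H)).symm.toLinearMap ∘ₗ
      ((TensorProduct.assoc k H H H).toLinearMap.lTensor H) ∘ₗ
      (((TensorProduct.comm k H H).toLinearMap.rTensor H).lTensor H) := by
  ext a b c d
  simp

lemma key2 (hcoc : ∀ h : H,
      TensorProduct.comm k H H (Coalgebra.comul (R := k) h) = Coalgebra.comul (R := k) h)
    (h : H) :
    tensorTensorTensorComm k H H H H (TensorProduct.map Δ Δ (Δ h)) =
      TensorProduct.map Δ Δ (Δ h) := by
  have hτ : (TensorProduct.comm k H H).toLinearMap ∘ₗ (Δ : H →ₗ[k] H ⊗[k] H) = Δ :=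
    LinearMap.ext hcoc
  have e1 : TensorProduct.map Δ Δ (Δ h) =
      (TensorProduct.assoc k H H (H ⊗[k] H)).symm
        (((TensorProduct.assoc k H H H).toLinearMap.lTensor H)
          ((((Δ : H →ₗ[k] H ⊗[k] H).rTensor H).lTensor H)
            (((Δ : H →ₗ[k] H ⊗[k] H).lTensor H) (Δ h)))) := by
    rw [G0]
    show (Δ : H →ₗ[k] H ⊗[k] H).lTensor (H ⊗[k] H) ((Δ : H →ₗ[k] H ⊗[k] H).rTensor H (Δ h)) = _
    rw [← Coalgebra.coassoc_symm_apply (R := k) h]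
    have g1 := LinearMap.congr_fun G1 (((Δ : H →ₗ[k] H ⊗[k] H).lTensor H) (Δ h))
    simp only [LinearMap.comp_apply, LinearEquiv.coe_coe] at g1
    rw [g1]
    congr 1
    rw [← LinearMap.lTensor_comp_apply, ← LinearMap.lTensor_comp_apply,
      ← LinearMap.lTensor_comp_apply]
    congr 2
    rw [← Coalgebra.coassoc (R := k) (A := H)]
    rfl
  rw [e1]
  have e2 := LinearMap.congr_fun G2
      ((((Δ : H →ₗ[k] H ⊗[k] H).rTensor H).lTensor H)
        (((Δ : H →ₗ[k] H ⊗[k] H).lTensor H) (Δ h)))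
  simp only [LinearMap.comp_apply, LinearEquiv.coe_coe] at e2
  rw [e2]
  congr 2
  rw [← LinearMap.lTensor_comp_apply, ← LinearMap.rTensor_comp, hτ]
end key

set_option maxHeartbeats 1600000 in
/-- for a cocommutative Hopf algebra H, the tensor product of two
partial H-module algebras, with h·(a⊗b) = Σ (h₁·a)⊗(h₂·b), is a partial
H-module algebra. -/
theorem stmt_10 {k H A B : Type*} [Field k] [Ring H] [HopfAlgebra k H]
    [Ring A] [Algebra k A] [Ring B] [Algebra k B]
    (hcoc : ∀ h : H,
      TensorProduct.comm k H H (Coalgebra.comul (R := k) h) = Coalgebra.comul (R := k) h)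
    (actA : H →ₗ[k] A →ₗ[k] A) (actB : H →ₗ[k] B →ₗ[k] B)
    (hA : IsPartialAction k actA) (hB : IsPartialAction k actB) :
    IsPartialAction k
      ((TensorProduct.homTensorHomMap (RingHom.id k) A B A B ∘ₗ TensorProduct.map actA actB) ∘ₗ
        (Coalgebra.comul (R := k) (A := H))) := by
  set Act : H →ₗ[k] (A ⊗[k] B) →ₗ[k] (A ⊗[k] B) :=
    (TensorProduct.homTensorHomMap (RingHom.id k) A B A B ∘ₗ TensorProduct.map actA actB) ∘ₗ
      (Coalgebra.comul (R := k) (A := H)) with hActdef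
  -- basic expansion of the action on pure tensors
  have act_tmul : ∀ (h : H) (a : A) (b : B),
      Act h (a ⊗ₜ b) = TensorProduct.map (actA.flip a) (actB.flip b)
        (Coalgebra.comul (R := k) h) := by
    intro h a b
    rw [hActdef]
    simp only [LinearMap.comp_apply]
    generalize (Coalgebra.comul (R := k) h) = t
    induction t using TensorProduct.induction_on with
    | zero => simp
    | tmul u v => simp
    | add t₁ t₂ h₁ h₂ => simp only [map_add, LinearMap.add_apply, h₁, h₂]
  have hActf : ∀ (a : A) (b : B), Act.flip (a ⊗ₜ b) =
      TensorProduct.map (actA.flip a) (actB.flip b) ∘ₗ (Coalgebra.comul (R := k) (A := H)) :=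
    fun a b => LinearMap.ext fun h => act_tmul h a b
  have hAct1 : Act.flip (1 : A ⊗[k] B) =
      TensorProduct.map (actA.flip 1) (actB.flip 1) ∘ₗ (Coalgebra.comul (R := k) (A := H)) := by
    rw [Algebra.TensorProduct.one_def]; exact hActf 1 1
  -- upgraded hypotheses
  have hAf21 : ∀ a a' : A, actA.flip (a * a') =
      sw k (actA.flip a) (actA.flip a') ∘ₗ (Coalgebra.comul (R := k) (A := H)) :=
    fun a a' => LinearMap.ext fun h => hA.2.1 h a a'
  have hBf21 : ∀ b b' : B, actB.flip (b * b') =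
      sw k (actB.flip b) (actB.flip b') ∘ₗ (Coalgebra.comul (R := k) (A := H)) :=
    fun b b' => LinearMap.ext fun h => hB.2.1 h b b'
  have hAf31 : ∀ (g : H) (a : A), actA.flip (actA g a) =
      sw k (actA.flip 1) (actA.flip a ∘ₗ LinearMap.mulRight k g) ∘ₗ
        (Coalgebra.comul (R := k) (A := H)) :=
    fun g a => LinearMap.ext fun h => (hA.2.2 h g a).1
  have hBf31 : ∀ (g : H) (b : B), actB.flip (actB g b) =
      sw k (actB.flip 1) (actB.flip b ∘ₗ LinearMap.mulRight k g) ∘ₗ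
        (Coalgebra.comul (R := k) (A := H)) :=
    fun g b => LinearMap.ext fun h => (hB.2.2 h g b).1
  have hAf32 : ∀ (g : H) (a : A), actA.flip (actA g a) =
      sw k (actA.flip a ∘ₗ LinearMap.mulRight k g) (actA.flip 1) ∘ₗ
        (Coalgebra.comul (R := k) (A := H)) :=
    fun g a => LinearMap.ext fun h => (hA.2.2 h g a).2
  have hBf32 : ∀ (g : H) (b : B), actB.flip (actB g b) =
      sw k (actB.flip b ∘ₗ LinearMap.mulRight k g) (actB.flip 1) ∘ₗ
        (Coalgebra.comul (R := k) (A := H)) :=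
    fun g b => LinearMap.ext fun h => (hB.2.2 h g b).2
  -- mulRight on a tensor product algebra
  have mr_tmul : ∀ u v : H, LinearMap.mulRight k ((u ⊗ₜ v : H ⊗[k] H)) =
      TensorProduct.map (LinearMap.mulRight k u) (LinearMap.mulRight k v) := by
    intro u v; ext x y
    simp [Algebra.TensorProduct.tmul_mul_tmul]
  have mr_zero : LinearMap.mulRight k ((0 : H ⊗[k] H)) = 0 := by
    ext x y; simp
  have mr_add : ∀ w w' : H ⊗[k] H,
      LinearMap.mulRight k (w + w') = LinearMap.mulRight k w + LinearMap.mulRight k w' := by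
    intro w w'; ext x y; simp [mul_add]
  refine ⟨?_, ?_, ?_⟩
  · -- unit
    intro x
    have h1 : (Coalgebra.comul (R := k) (1 : H)) = (1 : H) ⊗ₜ[k] (1 : H) := by
      rw [Bialgebra.comul_one]; rfl
    rw [hActdef]
    simp only [LinearMap.comp_apply, h1, map_tmul, TensorProduct.homTensorHomMap_apply]
    have hA1 : actA 1 = LinearMap.id := LinearMap.ext hA.1
    have hB1 : actB 1 = LinearMap.id := LinearMap.ext hB.1
    rw [hA1, hB1]
    simp [TensorProduct.map_id]
  · -- multiplicativity
    intro h x y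
    induction x using TensorProduct.induction_on with
    | zero => simp [sw_zero_left]
    | add x₁ x₂ ih₁ ih₂ => simp only [add_mul, map_add, sw_add_left, LinearMap.add_apply,
        ih₁, ih₂]
    | tmul a b =>
      induction y using TensorProduct.induction_on with
      | zero => simp [sw_zero_right]
      | add y₁ y₂ ih₁ ih₂ => simp only [mul_add, map_add, sw_add_right, LinearMap.add_apply,
          ih₁, ih₂]
      | tmul a' b' =>
        have L : Act h ((a ⊗ₜ b) * (a' ⊗ₜ b')) =
            TensorProduct.map (sw k (actA.flip a) (actA.flip a'))
              (sw k (actB.flip b) (actB.flip b'))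
              (TensorProduct.map (Coalgebra.comul) (Coalgebra.comul)
                (Coalgebra.comul (R := k) h)) := by
          rw [Algebra.TensorProduct.tmul_mul_tmul, act_tmul, hAf21, hBf21,
            TensorProduct.map_comp, LinearMap.comp_apply]
        rw [L, hActf, hActf, sw_tensor, key2 hcoc h]
  · -- composition
    intro h g x
    induction x using TensorProduct.induction_on with
    | zero =>
      constructor <;>
        simp [sw_zero_left, sw_zero_right, LinearMap.zero_comp]
    | add x₁ x₂ ih₁ ih₂ =>
      obtain ⟨ih₁l, ih₁r⟩ := ih₁
      obtain ⟨ih₂l, ih₂r⟩ := ih₂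
      constructor
      · simp only [map_add, LinearMap.add_comp, sw_add_right, LinearMap.add_apply, ih₁l, ih₂l]
      · simp only [map_add, LinearMap.add_comp, sw_add_left, LinearMap.add_apply, ih₁r, ih₂r]
    | tmul a b =>
      have hc : Act.flip ((a : A) ⊗ₜ[k] (b : B)) ∘ₗ LinearMap.mulRight k g =
          TensorProduct.map (actA.flip a) (actB.flip b) ∘ₗ
            LinearMap.mulRight k (Coalgebra.comul (R := k) g) ∘ₗ
            (Coalgebra.comul (R := k) (A := H)) := by
        ext h'
        simp only [LinearMap.comp_apply, LinearMap.mulRight_apply, LinearMap.flip_apply]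
        rw [show Act (h' * g) (a ⊗ₜ b) = TensorProduct.map (actA.flip a) (actB.flip b)
          (Coalgebra.comul (R := k) (h' * g)) from act_tmul _ a b, Bialgebra.comul_mul]
      constructor
      · rw [show Act g (a ⊗ₜ b) = TensorProduct.map (actA.flip a) (actB.flip b)
          (Coalgebra.comul (R := k) g) from act_tmul g a b, hc]
        generalize (Coalgebra.comul (R := k) g) = w
        induction w using TensorProduct.induction_on with
        | zero => simp [mr_zero, sw_zero_right]
        | add w₁ w₂ ih₁ ih₂ =>
          simp only [map_add, mr_add, LinearMap.add_comp, LinearMap.comp_add, sw_add_right,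
            LinearMap.add_apply, ih₁, ih₂]
        | tmul u v =>
          have L : Act h (TensorProduct.map (actA.flip a) (actB.flip b) (u ⊗ₜ v)) =
              TensorProduct.map
                (sw k (actA.flip 1) (actA.flip a ∘ₗ LinearMap.mulRight k u))
                (sw k (actB.flip 1) (actB.flip b ∘ₗ LinearMap.mulRight k v))
                (TensorProduct.map (Coalgebra.comul) (Coalgebra.comul)
                  (Coalgebra.comul (R := k) h)) := by
            rw [map_tmul, LinearMap.flip_apply, LinearMap.flip_apply, act_tmul,
              hAf31, hBf31, TensorProduct.map_comp, LinearMap.comp_apply]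
          rw [L, hAct1, mr_tmul, ← LinearMap.comp_assoc, ← TensorProduct.map_comp,
            sw_tensor, key2 hcoc h]
      · rw [show Act g (a ⊗ₜ b) = TensorProduct.map (actA.flip a) (actB.flip b)
          (Coalgebra.comul (R := k) g) from act_tmul g a b, hc]
        generalize (Coalgebra.comul (R := k) g) = w
        induction w using TensorProduct.induction_on with
        | zero => simp [mr_zero, sw_zero_left]
        | add w₁ w₂ ih₁ ih₂ =>
          simp only [map_add, mr_add, LinearMap.add_comp, LinearMap.comp_add, sw_add_left,
            LinearMap.add_apply, ih₁, ih₂]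
        | tmul u v =>
          have L : Act h (TensorProduct.map (actA.flip a) (actB.flip b) (u ⊗ₜ v)) =
              TensorProduct.map
                (sw k (actA.flip a ∘ₗ LinearMap.mulRight k u) (actA.flip 1))
                (sw k (actB.flip b ∘ₗ LinearMap.mulRight k v) (actB.flip 1))
                (TensorProduct.map (Coalgebra.comul) (Coalgebra.comul)
                  (Coalgebra.comul (R := k) h)) := by
            rw [map_tmul, LinearMap.flip_apply, LinearMap.flip_apply, act_tmul,
              hAf32, hBf32, TensorProduct.map_comp, LinearMap.comp_apply]
          rw [L, hAct1, mr_tmul, ← LinearMap.comp_assoc, ← TensorProduct.map_comp,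
            sw_tensor, key2 hcoc h]
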